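/- The sequential predictive scheme reproduces the order-compatible prior: for every interval partition π of {1,2,3,4}, Π_ω(π) = ∏_{j=2}^{4} c_j(π), where c_j(π) = a_j(π) if j lies in the same block as j−1 in π and c_j(π) = 1 − a_j(π) otherwise, and the tie probabilities are a₂(π) = (ω²+3ω+6)/((ω+2)(ω²+ω+3)); a₃(π) = (2ω+6)/(ω²+3ω+6) if 1 and 2 lie in the same block of π and a₃(π) = (ω+2)/(ω²+2ω+2) otherwise; a₄(π) = 3/(ω+3) if 1, 2, 3 lie in the same block of π, a₄(π) = 2/(ω+2) if 2 and 3 lie in the same block but 1 does not, and a₄(π) = 1/(ω+1) if 2 and 3 lie in different blocks of π. -/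

import Mathlib

open Finset
open scoped Classical

/-- Set partitions of `{1,2,3,4}`, modeled as finpartitions of `univ : Finset (Fin 4)`
(the element `i ∈ {1,2,3,4}` corresponds to `i - 1 : Fin 4`). -/
abbrev Part4 := Finpartition (Finset.univ : Finset (Fin 4))

/-- A partition is an interval partition if each of its blocks is a set of
consecutive integers. -/
def IsIntervalPart (π : Part4) : Prop :=
  ∀ b ∈ π.parts, ∀ i ∈ b, ∀ j ∈ b, ∀ k : Fin 4, i ≤ k → k ≤ j → k ∈ b

/-- The order-compatible weight `w_ω(π) = ω^(k-1) * ∏ (nᵢ - 1)!` for interval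
partitions `π` with `k` blocks of sizes `n₁, …, n_k`, and `0` otherwise. -/
noncomputable def wt (ω : ℝ) (π : Part4) : ℝ :=
  if IsIntervalPart π then
    ω ^ (π.parts.card - 1) * ∏ b ∈ π.parts, ((b.card - 1).factorial : ℝ)
  else 0

/-- The normalizing constant `Z(ω) = ∑_π w_ω(π)`. -/
noncomputable def Z (ω : ℝ) : ℝ := ∑ π : Part4, wt ω π

/-- The order-compatible prior probability of an event `E`:
`Π_ω(E) = (∑_{π ∈ E} w_ω(π)) / Z(ω)`. -/
noncomputable def Pr (ω : ℝ) (E : Part4 → Prop) : ℝ :=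
  (∑ π ∈ Finset.univ.filter E, wt ω π) / Z ω

/-- Conditional probability `Π_ω(A ∣ B) = Π_ω(A ∩ B) / Π_ω(B)`. -/
noncomputable def PrCond (ω : ℝ) (A B : Part4 → Prop) : ℝ :=
  Pr ω (fun π => A π ∧ B π) / Pr ω B

/-- The event that elements `i` and `j` lie in the same block of `π`. -/
def same (i j : Fin 4) (π : Part4) : Prop := ∃ b ∈ π.parts, i ∈ b ∧ j ∈ b

/-- The tie probability `a₂(ω) = (ω²+3ω+6)/((ω+2)(ω²+ω+3))` for `2` joining the
block of `1`. -/
noncomputable def a2 (ω : ℝ) : ℝ := (ω ^ 2 + 3 * ω + 6) / ((ω + 2) * (ω ^ 2 + ω + 3))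

/-- The tie probability `a₃(ω, π)` for `3` joining the block of `2`. -/
noncomputable def a3 (ω : ℝ) (π : Part4) : ℝ :=
  if same 0 1 π then (2 * ω + 6) / (ω ^ 2 + 3 * ω + 6)
  else (ω + 2) / (ω ^ 2 + 2 * ω + 2)

/-- The tie probability `a₄(ω, π)` for `4` joining the block of `3`. -/
noncomputable def a4 (ω : ℝ) (π : Part4) : ℝ :=
  if same 0 1 π ∧ same 1 2 π then 3 / (ω + 3)
  else if same 1 2 π then 2 / (ω + 2)
  else 1 / (ω + 1)

/-- The factor `c_j(π)`: the tie probability `a` if the relevant tie holds in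
`π`, and `1 - a` otherwise. -/
noncomputable def cfac (a : ℝ) (tie : Prop) : ℝ := if tie then a else 1 - a

/-!
An interval partition of `{1,2,3,4}` is determined by its three ties (whether `j - 1` and `j`
share a block), so the interval partitions are exactly the eight partitions `ofTies t`,
`t ∈ Bool³`. Their weights are `6, 2ω, ω, ω², 2ω, ω², ω², ω³`, whence
`Z(ω) = (ω + 2)(ω² + ω + 3)`, and the claim becomes eight identities between rational functions
of `ω`.
-/

theorem Finpartition.eq_of_forall_part_eq {α : Type*} [DecidableEq α] {s : Finset α}
    {P Q : Finpartition s} (h : ∀ a ∈ s, P.part a = Q.part a) : P = Q := by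
  have parts_subset {P Q : Finpartition s} (h : ∀ a ∈ s, P.part a = Q.part a) :
      P.parts ⊆ Q.parts := by
    intro b hb
    obtain ⟨a, ha, rfl⟩ := P.part_surjOn hb
    exact h a ha ▸ Q.part_mem.2 ha
  exact Finpartition.ext <| (parts_subset h).antisymm <| parts_subset fun a ha => (h a ha).symm

section Same

variable {π σ : Part4} {i j k : Fin 4}

theorem same_iff_mem_part : same i j π ↔ i ∈ π.part j :=
  (π.mem_part_iff_exists).symm

theorem same_refl (π : Part4) (i : Fin 4) : same i i π :=
  same_iff_mem_part.2 (π.mem_part (mem_univ i))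

theorem same_comm : same i j π ↔ same j i π := by
  simp only [same, and_comm]

theorem same_trans (hij : same i j π) (hjk : same j k π) : same i k π := by
  obtain ⟨b, hb, hi, hj⟩ := hij
  obtain ⟨c, hc, hj', hk⟩ := hjk
  exact ⟨b, hb, hi, π.eq_of_mem_parts hb hc hj hj' ▸ hk⟩

theorem eq_of_forall_same_iff (h : ∀ i j, same i j π ↔ same i j σ) : π = σ :=
  Finpartition.eq_of_forall_part_eq fun j _ => by
    ext i
    rw [← same_iff_mem_part, ← same_iff_mem_part, h]

theorem IsIntervalPart.same_iff_of_le (hπ : IsIntervalPart π) (hik : i ≤ k) (hkj : k ≤ j) :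
    same i j π ↔ same i k π ∧ same k j π := by
  refine ⟨fun ⟨b, hb, hi, hj⟩ => ?_, fun h => same_trans h.1 h.2⟩
  have hk := hπ b hb i hi j hj k hik hkj
  exact ⟨⟨b, hb, hi, hk⟩, ⟨b, hb, hk, hj⟩⟩

theorem IsIntervalPart.eq_of_ties_iff (hπ : IsIntervalPart π) (hσ : IsIntervalPart σ)
    (h₁ : same 0 1 π ↔ same 0 1 σ) (h₂ : same 1 2 π ↔ same 1 2 σ)
    (h₃ : same 2 3 π ↔ same 2 3 σ) : π = σ := by
  have split {ρ : Part4} (hρ : IsIntervalPart ρ) :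
      (same 0 2 ρ ↔ same 0 1 ρ ∧ same 1 2 ρ) ∧ (same 1 3 ρ ↔ same 1 2 ρ ∧ same 2 3 ρ) ∧
        (same 0 3 ρ ↔ same 0 1 ρ ∧ same 1 3 ρ) :=
    ⟨hρ.same_iff_of_le (by decide) (by decide), hρ.same_iff_of_le (by decide) (by decide),
      hρ.same_iff_of_le (by decide) (by decide)⟩
  obtain ⟨hπ₀₂, hπ₁₃, hπ₀₃⟩ := split hπ
  obtain ⟨hσ₀₂, hσ₁₃, hσ₀₃⟩ := split hσ
  refine eq_of_forall_same_iff fun i j => ?_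
  wlog hij : i ≤ j generalizing i j
  · rw [same_comm, same_comm (π := σ)]
    exact this j i (le_of_not_ge hij)
  fin_cases i <;> fin_cases j <;> simp_all [same_refl]

end Same

def ofTies : Bool × Bool × Bool → Part4
  | (true, true, true) => ⟨{{0, 1, 2, 3}}, by decide, by decide, by decide⟩
  | (true, true, false) => ⟨{{0, 1, 2}, {3}}, by decide, by decide, by decide⟩
  | (true, false, true) => ⟨{{0, 1}, {2, 3}}, by decide, by decide, by decide⟩
  | (true, false, false) => ⟨{{0, 1}, {2}, {3}}, by decide, by decide, by decide⟩
  | (false, true, true) => ⟨{{0}, {1, 2, 3}}, by decide, by decide, by decide⟩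
  | (false, true, false) => ⟨{{0}, {1, 2}, {3}}, by decide, by decide, by decide⟩
  | (false, false, true) => ⟨{{0}, {1}, {2, 3}}, by decide, by decide, by decide⟩
  | (false, false, false) => ⟨{{0}, {1}, {2}, {3}}, by decide, by decide, by decide⟩

theorem isIntervalPart_ofTies (t : Bool × Bool × Bool) : IsIntervalPart (ofTies t) := by
  unfold IsIntervalPart
  obtain ⟨_ | _, _ | _, _ | _⟩ := t <;> decide

theorem same_ofTies (t : Bool × Bool × Bool) :
    (same 0 1 (ofTies t) ↔ t.1) ∧ (same 1 2 (ofTies t) ↔ t.2.1) ∧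
      (same 2 3 (ofTies t) ↔ t.2.2) := by
  unfold same
  obtain ⟨_ | _, _ | _, _ | _⟩ := t <;> decide

theorem ofTies_injective : Function.Injective ofTies := by
  intro t s h
  obtain ⟨ht₁, ht₂, ht₃⟩ := same_ofTies t
  obtain ⟨hs₁, hs₂, hs₃⟩ := same_ofTies s
  rw [h] at ht₁ ht₂ ht₃
  exact Prod.ext (Bool.eq_iff_iff.2 (ht₁.symm.trans hs₁)) <|
    Prod.ext (Bool.eq_iff_iff.2 (ht₂.symm.trans hs₂)) (Bool.eq_iff_iff.2 (ht₃.symm.trans hs₃))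

theorem IsIntervalPart.exists_eq_ofTies {π : Part4} (hπ : IsIntervalPart π) :
    ∃ t, π = ofTies t := by
  obtain ⟨h₁, h₂, h₃⟩ :=
    same_ofTies (decide (same 0 1 π), decide (same 1 2 π), decide (same 2 3 π))
  exact ⟨_, hπ.eq_of_ties_iff (isIntervalPart_ofTies _) (by simpa using h₁.symm)
    (by simpa using h₂.symm) (by simpa using h₃.symm)⟩

theorem wt_ofTies (ω : ℝ) (t : Bool × Bool × Bool) : wt ω (ofTies t) =
    ω ^ (#(ofTies t).parts - 1) * ((∏ b ∈ (ofTies t).parts, (#b - 1).factorial : ℕ) : ℝ) := by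
  rw [wt, if_pos (isIntervalPart_ofTies t), Nat.cast_prod]

theorem Z_eq_sum_ofTies (ω : ℝ) : Z ω = ∑ t, wt ω (ofTies t) := by
  refine (Fintype.sum_of_injective ofTies ofTies_injective _ _ (fun π hπ => ?_) fun _ => rfl).symm
  rw [wt, if_neg]
  exact fun hint => hπ (hint.exists_eq_ofTies.imp fun _ => Eq.symm)

theorem Z_eq (ω : ℝ) : Z ω = (ω + 2) * (ω ^ 2 + ω + 3) := by
  simp only [Z_eq_sum_ofTies, Fintype.sum_prod_type, Fintype.sum_bool, wt_ofTies]
  simp +decide [ofTies, Nat.factorial]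
  ring

/-- The sequential predictive scheme reproduces the order-compatible prior:
for every interval partition `π` of `{1,2,3,4}`,
`Π_ω(π) = c₂(π) · c₃(π) · c₄(π)`. -/
theorem predictive_scheme (ω : ℝ) (hω : 0 < ω) (π : Part4) (hπ : IsIntervalPart π) :
    wt ω π / Z ω =
      cfac (a2 ω) (same 0 1 π) * cfac (a3 ω π) (same 1 2 π) *
        cfac (a4 ω π) (same 2 3 π) := by
  obtain ⟨⟨t₁, t₂, t₃⟩, rfl⟩ := hπ.exists_eq_ofTies
  obtain ⟨h₁, h₂, h₃⟩ := same_ofTies (t₁, t₂, t₃)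
  simp only [cfac, a3, a4, h₁, h₂, h₃, Z_eq, a2]
  rw [wt_ofTies]
  cases t₁ <;> cases t₂ <;> cases t₃ <;>
    simp +decide [ofTies, Nat.factorial] <;> field_simp <;> ring
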